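/- For every integer k ≥ 1, the number of tuples (i_1,…,i_{2k}) ∈ {1,…,n}^{2k} such that E[∏_{j=1}^{2k} R(i_j, i_{j+1})] ≠ 0 (where i_{2k+1} := i_1) is at most (2k)^{2k−2}·n^{k+1}. -/

import Mathlib

def sgn (b : Bool) : ℝ := if b then 1 else -1

noncomputable def Pr {n : ℕ} (P : (Sym2 (Fin n) → Bool) → Prop) : ℝ := by
  classical
  exact ((Finset.univ.filter P).card : ℝ) / (Fintype.card (Sym2 (Fin n) → Bool))

noncomputable def Ex {n : ℕ} (f : (Sym2 (Fin n) → Bool) → ℝ) : ℝ :=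
  (∑ g : Sym2 (Fin n) → Bool, f g) / (Fintype.card (Sym2 (Fin n) → Bool))

noncomputable def Rmat {n : ℕ} (g : Sym2 (Fin n) → Bool) : Matrix (Fin n) (Fin n) ℝ :=
  Matrix.of fun i j => if i = j then 0 else sgn (g s(i, j))

def cyc {m : ℕ} (j : Fin m) : Fin m := ⟨((j : ℕ) + 1) % m, Nat.mod_lt _ j.pos⟩

/-! A nonzero expectation forces every step `i j → i (j + 1)` of the closed walk to join distinct
vertices and every edge to be traversed an even number of times: otherwise flipping the sign of an
edge of odd multiplicity is a measure-preserving involution negating the product. Such a walk of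
length `2k` has at most `k` distinct edges, hence, being connected, at most `k + 1` distinct
vertices. A walk with `i 0 ≠ i 1` and at most `k + 1` vertices is recovered from the `n ^ (k + 1)`
possible values of its labels and the `(k + 1) ^ (2k - 2)` label sequences at positions
`2, …, 2k - 1`, the labels `0` and `1` being reserved for `i 0` and `i 1`. -/

open Finset

section Walks

variable {α : Type*} [DecidableEq α]

theorem image_univ_eq_insert_last {m : ℕ} (i : Fin (m + 1) → α) :
    univ.image i = insert (i (Fin.last m)) (univ.image fun j : Fin m => i j.castSucc) := by
  ext v
  simp [Fin.exists_fin_succ', or_comm, eq_comm]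

theorem card_image_le_card_image_edges_add_one : ∀ {m : ℕ} (i : Fin (m + 1) → α),
    #(univ.image i) ≤ #(univ.image fun j : Fin m => s(i j.castSucc, i j.succ)) + 1
  | 0, i => by simp
  | m + 1, i => by
    have ih := card_image_le_card_image_edges_add_one fun j : Fin (m + 1) => i j.castSucc
    rw [image_univ_eq_insert_last i,
      image_univ_eq_insert_last fun j : Fin (m + 1) => s(i j.castSucc, i j.succ)]
    by_cases hv : i (Fin.last (m + 1)) ∈ univ.image fun j : Fin (m + 1) => i j.castSucc
    · rw [insert_eq_of_mem hv]
      refine ih.trans (Nat.add_le_add_right (card_le_card ?_) 1)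
      simpa only [Fin.succ_castSucc] using subset_insert _ _
    · have hnew : s(i (Fin.last m).castSucc, i (Fin.last m).succ) ∉
          univ.image fun j : Fin m => s(i j.castSucc.castSucc, i j.castSucc.succ) := by
        simp only [mem_image, mem_univ, true_and, not_exists, Fin.succ_last]
        intro j hj
        have hmem := hj ▸ Sym2.mem_mk_right _ (i (Fin.last (m + 1)))
        rcases Sym2.mem_iff.1 hmem with h | h
        · exact hv (mem_image.2 ⟨j.castSucc, mem_univ _, h.symm⟩)
        · exact hv (mem_image.2 ⟨j.succ, mem_univ _, by rw [← Fin.succ_castSucc, h]⟩)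
      rw [card_insert_of_notMem hv, card_insert_of_notMem hnew]
      simpa only [Fin.succ_castSucc] using Nat.add_le_add_right ih 1

theorem cyc_castSucc {m : ℕ} (j : Fin m) : cyc j.castSucc = j.succ :=
  Fin.ext (Nat.mod_eq_of_lt (Nat.succ_lt_succ j.isLt))

theorem cyc_zero (m : ℕ) : cyc (0 : Fin (m + 2)) = 1 :=
  cyc_castSucc (0 : Fin (m + 1))

theorem two_mul_card_image_le_of_even {N : ℕ} (hN : 0 < N) (i : Fin N → α)
    (heven : ∀ j₀, Even #{j | s(i j, i (cyc j)) = s(i j₀, i (cyc j₀))}) :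
    2 * #(univ.image i) ≤ N + 2 := by
  obtain ⟨m, rfl⟩ := Nat.exists_eq_add_one_of_ne_zero hN.ne'
  have hedges : 2 * #(univ.image fun j => s(i j, i (cyc j))) ≤ m + 1 := by
    refine (mul_card_image_le_card _ 2 ?_).trans_eq (card_fin _)
    simp only [mem_image, mem_univ, true_and]
    rintro _ ⟨j₀, rfl⟩
    obtain ⟨r, hr⟩ := heven j₀
    have : 0 < #{j | s(i j, i (cyc j)) = s(i j₀, i (cyc j₀))} := card_pos.2 ⟨j₀, by simp⟩
    omega
  have hpath : (univ.image fun j : Fin m => s(i j.castSucc, i j.succ)) ⊆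
      univ.image fun j => s(i j, i (cyc j)) := by
    intro e he
    obtain ⟨j, -, rfl⟩ := mem_image.1 he
    exact mem_image.2 ⟨j.castSucc, mem_univ _, by rw [cyc_castSucc]⟩
  have := card_image_le_card_image_edges_add_one i
  have := card_le_card hpath
  omega

end Walks

theorem card_filter_ne_and_card_image_le {α : Type*} [Fintype α] [DecidableEq α] (m r : ℕ) :
    #{i : Fin (m + 2) → α | i 0 ≠ i 1 ∧ #(univ.image i) ≤ r + 2} ≤
      (r + 2) ^ m * Fintype.card α ^ (r + 2) := by
  let decode : (Fin m → Fin (r + 2)) × (Fin (r + 2) → α) → Fin (m + 2) → α :=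
    fun cv => Fin.cons (cv.2 0) (Fin.cons (cv.2 1) (cv.2 ∘ cv.1))
  calc _ ≤ #(univ.image decode) := card_le_card fun i hi => ?_
    _ ≤ _ := card_image_le.trans (by simp)
  obtain ⟨h01, hcard⟩ := (mem_filter.1 hi).2
  -- a value is labelled by its index in `L`, which lists `i 0` and `i 1` first
  let L := i 0 :: i 1 :: (((univ.image i).erase (i 0)).erase (i 1)).toList
  have hL : L.length ≤ r + 2 := by
    have h1 : i 1 ∈ (univ.image i).erase (i 0) :=
      mem_erase.2 ⟨h01.symm, mem_image_of_mem _ (mem_univ _)⟩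
    simp only [L, List.length_cons, length_toList, card_erase_of_mem h1,
      card_erase_of_mem (mem_image_of_mem i (mem_univ 0))]
    omega
  have hmem : ∀ j, i j ∈ L := by
    intro j
    by_cases h0 : i j = i 0
    · simp [L, h0]
    by_cases h1 : i j = i 1
    · simp [L, h1]
    · simp [L, h0, h1]
  let label (j : Fin m) : Fin (r + 2) :=
    ⟨L.idxOf (i j.succ.succ), (List.idxOf_lt_length_iff.2 (hmem _)).trans_le hL⟩
  refine mem_image.2 ⟨(label, fun l => L.getD l (i 0)), mem_univ _, funext fun j => ?_⟩
  refine Fin.cases ?_ (Fin.cases ?_ fun j => ?_) j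
  · simp [decode, L]
  · simp [decode, L]
  · have h := List.idxOf_lt_length_iff.2 (hmem j.succ.succ)
    simp [decode, label, List.getElem?_eq_getElem h, List.getElem_idxOf]

section RandomSigns

variable {n : ℕ} {ι : Type*} [Fintype ι]

theorem sgn_not (b : Bool) : sgn (!b) = -sgn b := by
  cases b <;> simp [sgn]

theorem Rmat_of_ne (g : Sym2 (Fin n) → Bool) {a b : Fin n} (h : a ≠ b) :
    Rmat g a b = sgn (g s(a, b)) := by
  simp [Rmat, h]

theorem Ex_prod_sgn_eq_zero_of_odd (e : ι → Sym2 (Fin n)) (x : Sym2 (Fin n))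
    (hodd : Odd #{j | e j = x}) : Ex (fun g => ∏ j, sgn (g (e j))) = 0 := by
  let flip (g : Sym2 (Fin n) → Bool) : Sym2 (Fin n) → Bool := Function.update g x (!g x)
  have hflip : Function.Involutive flip := fun g => by
    funext y
    by_cases hy : y = x <;> simp [flip, hy]
  have hneg : ∀ g, ∏ j, sgn (flip g (e j)) = -∏ j, sgn (g (e j)) := fun g => calc
    ∏ j, sgn (flip g (e j)) = ∏ j, (if e j = x then -1 else 1) * sgn (g (e j)) :=
      prod_congr rfl fun j _ => by by_cases h : e j = x <;> simp [flip, h, sgn_not]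
    _ = (-1) ^ #{j | e j = x} * ∏ j, sgn (g (e j)) := by
      rw [prod_mul_distrib, prod_ite, prod_const, prod_const, one_pow, mul_one]
    _ = -∏ j, sgn (g (e j)) := by rw [hodd.neg_one_pow, neg_one_mul]
  have hsum := Equiv.sum_comp hflip.toPerm fun g => ∏ j, sgn (g (e j))
  simp only [Function.Involutive.coe_toPerm, hneg, sum_neg_distrib, neg_eq_self] at hsum
  simp [Ex, hsum]

theorem Ex_prod_Rmat_ne_zero {a b : ι → Fin n}
    (h : Ex (fun g => ∏ j, Rmat g (a j) (b j)) ≠ 0) :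
    (∀ j, a j ≠ b j) ∧ ∀ j₀, Even #{j | s(a j, b j) = s(a j₀, b j₀)} := by
  have hloop : ∀ j, a j ≠ b j := fun j₀ hj₀ =>
    h (by simp [Ex, prod_eq_zero (mem_univ j₀), Rmat, hj₀])
  refine ⟨hloop, fun j₀ => Nat.not_odd_iff_even.1 fun hodd => h ?_⟩
  simpa only [Rmat_of_ne _ (hloop _)] using
    Ex_prod_sgn_eq_zero_of_odd (fun j => s(a j, b j)) _ hodd

end RandomSigns

open scoped Classical in
theorem stmt5_general (n k : ℕ) (hk : 1 ≤ k) :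
    (Finset.univ.filter fun i : Fin (2 * k) → Fin n =>
        Ex (fun g => ∏ j : Fin (2 * k), Rmat g (i j) (i (cyc j))) ≠ 0).card
      ≤ (2 * k) ^ (2 * k - 2) * n ^ (k + 1) := by
  obtain ⟨k, rfl⟩ := Nat.exists_eq_add_of_le' hk
  calc _ ≤ #{i : Fin (2 * k + 2) → Fin n | i 0 ≠ i 1 ∧ #(univ.image i) ≤ k + 2} :=
        card_le_card fun i hi => ?_
    _ ≤ (k + 2) ^ (2 * k) * n ^ (k + 2) := by
        simpa using card_filter_ne_and_card_image_le (α := Fin n) (2 * k) k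
    _ ≤ _ := by
        rw [show 2 * (k + 1) - 2 = 2 * k by omega]
        gcongr
        omega
  obtain ⟨hloop, heven⟩ := Ex_prod_Rmat_ne_zero (mem_filter.1 hi).2
  have hcard := two_mul_card_image_le_of_even (by omega) i heven
  exact mem_filter.2 ⟨mem_univ _, by simpa [cyc_zero] using hloop 0, by omega⟩

open scoped Classical in
theorem stmt5 (n k : ℕ) (hn : 1 ≤ n) (hk : 1 ≤ k) :
    (Finset.univ.filter fun i : Fin (2 * k) → Fin n =>
        Ex (fun g => ∏ j : Fin (2 * k), Rmat g (i j) (i (cyc j))) ≠ 0).card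
      ≤ (2 * k) ^ (2 * k - 2) * n ^ (k + 1) :=
  stmt5_general n k hk
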